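/- Let X be a Lie algebra over ℝ and R : X → X a hereditary operator. Suppose x₀, y₁ ∈ X satisfy L_{x₀}R = 0, L_{y₁}R = −R², and [x₀, y₁] = 2 R x₀. Define xₙ = Rⁿ x₀ (n ≥ 0) and yₙ = R^{n−1} y₁ (n ≥ 1). Then [xₙ, yₘ] = (n + 2) x_{n+m} for all n ≥ 0, m ≥ 1. -/

import Mathlib

/-!
Write `x ↦ L_x R` for the Lie derivative of `R`. Expanding the torsion gives
`N_R(x, ·) = L_{Rx}R − R ∘ L_x R`, so for hereditary `R` the condition `L_x R = 0` passes from
`x` to `Rx`: every `xₙ` is a symmetry, and `[xₙ, R y] = R [xₙ, y]`. This reduces the claim to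
`m = 1`, where `L_{y₁}R = −R²` yields `[R z, y₁] = R² z + R [z, y₁]`, and induction on `n`
starting from `[x₀, y₁] = 2 R x₀` gives `[xₙ, y₁] = (n + 2) x_{n+1}`.
-/

section Hereditary

variable {K L : Type*} [CommRing K] [LieRing L] [LieAlgebra K L] (R : L →ₗ[K] L)

def nijenhuisTorsion (x y : L) : L :=
  ⁅R x, R y⁆ - R ⁅R x, y⁆ - R ⁅x, R y⁆ + R (R ⁅x, y⁆)

/-- `(L_x R)(y)`, the Lie derivative of `R` along `x`. -/
def lieDeriv (x y : L) : L :=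
  ⁅x, R y⁆ - R ⁅x, y⁆

variable {R}

theorem nijenhuisTorsion_eq_lieDeriv_sub (x y : L) :
    nijenhuisTorsion R x y = lieDeriv R (R x) y - R (lieDeriv R x y) := by
  simp only [nijenhuisTorsion, lieDeriv, map_sub]
  abel

theorem lieDeriv_apply_eq_zero (hR : ∀ x y, nijenhuisTorsion R x y = 0) {x : L}
    (hx : ∀ y, lieDeriv R x y = 0) (y : L) : lieDeriv R (R x) y = 0 := by
  simpa [nijenhuisTorsion_eq_lieDeriv_sub, hx y] using hR x y

theorem lieDeriv_pow_apply_eq_zero (hR : ∀ x y, nijenhuisTorsion R x y = 0) {x : L}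
    (hx : ∀ y, lieDeriv R x y = 0) (n : ℕ) (y : L) : lieDeriv R ((R ^ n) x) y = 0 := by
  induction n generalizing y with
  | zero => exact hx y
  | succ n ih => rw [Module.End.iterate_succ']; exact lieDeriv_apply_eq_zero hR ih y

theorem lie_pow_apply_right {x : L} (hx : ∀ y, lieDeriv R x y = 0) (n : ℕ) (y : L) :
    ⁅x, (R ^ n) y⁆ = (R ^ n) ⁅x, y⁆ := by
  induction n with
  | zero => rfl
  | succ n ih =>
    rw [Module.End.iterate_succ', LinearMap.comp_apply, LinearMap.comp_apply, ← ih]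
    exact sub_eq_zero.mp (hx _)

theorem lie_apply_left_of_lieDeriv_eq_neg_sq {y : L} (hy : ∀ z, lieDeriv R y z = -R (R z))
    (z : L) : ⁅R z, y⁆ = R (R z) + R ⁅z, y⁆ := by
  have h := hy z
  rw [lieDeriv, sub_eq_iff_eq_add] at h
  rw [← lie_skew, h, ← lie_skew z y, map_neg]
  abel

theorem lie_pow_apply_left_of_lieDeriv_eq_neg_sq {x y : L}
    (hy : ∀ z, lieDeriv R y z = -R (R z)) (hxy : ⁅x, y⁆ = (2 : K) • R x) (n : ℕ) :
    ⁅(R ^ n) x, y⁆ = ((n : K) + 2) • (R ^ (n + 1)) x := by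
  induction n with
  | zero => simpa using hxy
  | succ n ih =>
    simp only [Module.End.iterate_succ', LinearMap.comp_apply] at ih ⊢
    rw [lie_apply_left_of_lieDeriv_eq_neg_sq hy, ih, map_smul]
    push_cast
    module

end Hereditary

/-- Under the hypotheses `N_R = 0`, `L_{x₀}R = 0`, `L_{y₁}R = −R²`,
`[x₀,y₁] = 2Rx₀`, with `xₙ = Rⁿx₀` and `yₘ = R^{m−1}y₁` (`m = j+1 ≥ 1`),
one has `[xₙ, yₘ] = (n+2) x_{n+m}`. -/
theorem symmetry_masterSymmetry_bracket {X : Type*} [LieRing X] [LieAlgebra ℝ X]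
    (R : X →ₗ[ℝ] X)
    (hR : ∀ x y : X,
      ⁅R x, R y⁆ - R ⁅R x, y⁆ - R ⁅x, R y⁆ + R (R ⁅x, y⁆) = 0)
    (x₀ y₁ : X)
    (hx₀ : ∀ y : X, ⁅x₀, R y⁆ - R ⁅x₀, y⁆ = 0)
    (hy₁ : ∀ y : X, ⁅y₁, R y⁆ - R ⁅y₁, y⁆ = -(R (R y)))
    (hxy : ⁅x₀, y₁⁆ = (2 : ℝ) • R x₀) :
    ∀ n j : ℕ,
      ⁅(R ^ n) x₀, (R ^ j) y₁⁆ = ((n : ℝ) + 2) • (R ^ (n + j + 1)) x₀ := by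
  intro n j
  have hxₙ : ∀ y, lieDeriv R ((R ^ n) x₀) y = 0 := lieDeriv_pow_apply_eq_zero hR hx₀ n
  rw [lie_pow_apply_right hxₙ, lie_pow_apply_left_of_lieDeriv_eq_neg_sq hy₁ hxy, map_smul,
    ← Module.End.mul_apply, ← pow_add, add_comm j, add_right_comm]
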